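/- arXiv:2107.10918 — 5 statements merged into one kernel-verified Lean document; each statement's English description precedes it below -/
import Mathlib

section
/- Let E be a number field, let n ≥ 1, and let b ∈ Eⁿ be a column vector whose coordinates span E as a ℚ-vector space. Suppose g is an n × n matrix with integer entries and determinant ±1 (i.e. g ∈ GL_n(ℤ)), and suppose g·b = x·b for some x ∈ E. Then x is a unit of the ring of integers 𝓞_E of E; that is, x ∈ 𝓞_E and x⁻¹ ∈ 𝓞_E. -/
/-!
`x` is an eigenvalue of the integer matrix `g` with eigenvector `b ≠ 0`, hence a root of the
monic integer polynomial `g.charpoly`. Since `det g = ±1`, the inverse `g⁻¹` is again an integer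
matrix, and `x⁻¹` is its eigenvalue on the same eigenvector.
-/

open Polynomial Matrix

lemma Submodule.ne_zero_of_span_range_eq_top {ι R V : Type*} [Semiring R] [AddCommMonoid V]
    [Module R V] [Nontrivial V] {v : ι → V} (hv : span R (Set.range v) = ⊤) : v ≠ 0 := by
  rintro rfl
  have hbot : span R (Set.range (0 : ι → V)) = ⊥ :=
    span_eq_bot.2 fun _ ⟨_, hx⟩ => hx.symm
  exact bot_ne_top (hbot ▸ hv)

namespace Matrix

variable {ι : Type*} [Fintype ι] [DecidableEq ι]

lemma isRoot_charpoly_of_mulVec_eq_smul {A : Type*} [CommRing A] [IsDomain A]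
    {M : Matrix ι ι A} {v : ι → A} {μ : A} (hv : v ≠ 0) (h : M *ᵥ v = μ • v) :
    M.charpoly.IsRoot μ := by
  rw [IsRoot, eval_charpoly, ← exists_mulVec_eq_zero_iff]
  exact ⟨v, hv, by simp [sub_mulVec, h]⟩

lemma isIntegral_of_map_mulVec_eq_smul {R A : Type*} [CommRing R] [CommRing A] [IsDomain A]
    [Algebra R A] (M : Matrix ι ι R) {v : ι → A} {μ : A} (hv : v ≠ 0)
    (h : M.map (algebraMap R A) *ᵥ v = μ • v) : IsIntegral R μ :=
  ⟨M.charpoly, M.charpoly_monic, by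
    rw [eval₂_eq_eval_map, ← charpoly_map]
    exact isRoot_charpoly_of_mulVec_eq_smul hv h⟩

lemma mulVec_eq_inv_smul_of_mul_eq_one {K : Type*} [Field K] {M N : Matrix ι ι K}
    {v : ι → K} {μ : K} (hNM : N * M = 1) (hv : v ≠ 0) (h : M *ᵥ v = μ • v) :
    N *ᵥ v = μ⁻¹ • v := by
  have hv_eq : μ • N *ᵥ v = v := by
    rw [← mulVec_smul, ← h, mulVec_mulVec, hNM, one_mulVec]
  have hμ : μ ≠ 0 := by
    rintro rfl
    exact hv (by simpa using hv_eq.symm)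
  exact (eq_inv_smul_iff₀ hμ).2 hv_eq

end Matrix

theorem stmt_1_general (E : Type*) [Field E] [NumberField E] (n : ℕ)
    (b : Fin n → E) (hb : Submodule.span ℚ (Set.range b) = ⊤)
    (g : Matrix (Fin n) (Fin n) ℤ) (hg : g.det = 1 ∨ g.det = -1)
    (x : E) (hx : (g.map ((↑) : ℤ → E)).mulVec b = x • b) :
    IsIntegral ℤ x ∧ IsIntegral ℤ x⁻¹ := by
  have hb0 : b ≠ 0 := Submodule.ne_zero_of_span_range_eq_top hb
  have hunit : IsUnit g.det := by rcases hg with h | h <;> simp [h]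
  have hinv : g⁻¹.map (algebraMap ℤ E) * g.map (algebraMap ℤ E) = 1 := by
    rw [← Matrix.map_mul, nonsing_inv_mul g hunit, Matrix.map_one _ (map_zero _) (map_one _)]
  replace hx : g.map (algebraMap ℤ E) *ᵥ b = x • b := by simpa using hx
  exact ⟨isIntegral_of_map_mulVec_eq_smul g hb0 hx,
    isIntegral_of_map_mulVec_eq_smul g⁻¹ hb0 (mulVec_eq_inv_smul_of_mul_eq_one hinv hb0 hx)⟩

/-- Let `E` be a number field, `n ≥ 1`, and `b ∈ Eⁿ` a column vector whose
coordinates span `E` as a `ℚ`-vector space.  If `g` is an `n × n` integer matrix of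
determinant `±1` and `g · b = x • b` for some `x ∈ E`, then `x` is a unit of the ring of
integers of `E`, i.e. both `x` and `x⁻¹` are integral over `ℤ`. -/
theorem stmt_1 (E : Type*) [Field E] [NumberField E] (n : ℕ) (hn : 1 ≤ n)
    (b : Fin n → E) (hb : Submodule.span ℚ (Set.range b) = ⊤)
    (g : Matrix (Fin n) (Fin n) ℤ) (hg : g.det = 1 ∨ g.det = -1)
    (x : E) (hx : (g.map ((↑) : ℤ → E)).mulVec b = x • b) :
    IsIntegral ℤ x ∧ IsIntegral ℤ x⁻¹ :=
  stmt_1_general E n b hb g hg x hx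
end

section
/- Let n ≥ 2 and N ≥ 1 be integers. Let u, v ∈ ℤⁿ be primitive column vectors such that u ≡ v (mod N) coordinatewise. Then there exists g ∈ SL_n(ℤ) with g ≡ I (mod N) entrywise (i.e. g lies in the principal congruence subgroup Γ(N)) such that g·u = v. -/
/-!
`Γ(N)` is the kernel of reduction modulo `N`, so it is normal in `SL_n(ℤ)`. For `N = 1`
the special case `u = eᵢ` says that every primitive `u` is `a • eᵢ` for some
`a ∈ SL_n(ℤ)`; conjugating by `a` reduces the theorem to `u = eᵢ`.

A primitive `w ≡ eᵢ (mod N)` is moved to `eᵢ` inside its `Γ(N)`-orbit. Shears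
`x ↦ x + (r ⬝ᵥ x) • c` with `N ∣ c` and `r ⬝ᵥ c = 0` lie in `Γ(N)`. With them one first
makes `wᵢ ≠ 0`, then makes `wᵢ, wⱼ` coprime by adding to `wⱼ` a multiple of
`N · gcd(w_k, k ≠ i, j)` (prime avoidance), and then clears every other coordinate. What is
left is `a eᵢ + b eⱼ` with `αa + βb = 1`, the first column of
`!![a, (a - 1)β; b, α + βb]`, which lies in `Γ(N)` of `SL₂(ℤ)`.
-/

open Matrix MulAction

open UniqueFactorizationMonoid in
theorem exists_isCoprime_add_mul {R : Type*} [CommRing R] [IsDomain R]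
    [IsPrincipalIdealRing R] [NormalizationMonoid R] {a b m : R} (hm : m ≠ 0)
    (h : ∀ p, Prime p → p ∣ a → p ∣ b → ¬p ∣ m) : ∃ k, IsCoprime (a + b * k) m := by
  classical
  -- `k` is the product of the prime factors of `m` that do not divide `a`.
  set k := ∏ q ∈ (normalizedFactors m).toFinset with ¬q ∣ a, q
  refine ⟨k, isCoprime_of_prime_dvd (fun h0 => hm h0.2) fun p hp hpak hpm => ?_⟩
  obtain ⟨q, hq, hpq⟩ := exists_mem_normalizedFactors_of_dvd hm hp.irreducible hpm
  have hpk : p ∣ k ↔ ¬p ∣ a := by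
    refine ⟨fun hpk => ?_, fun hpa => ?_⟩
    · obtain ⟨q', hq', hpq'⟩ := (hp.dvd_finsetProd_iff _).mp hpk
      rw [Finset.mem_filter, Multiset.mem_toFinset] at hq'
      rw [(hp.associated_of_dvd (prime_of_normalized_factor q' hq'.1) hpq').dvd_iff_dvd_left]
      exact hq'.2
    · refine hpq.dvd.trans (Finset.dvd_prod_of_mem _ ?_)
      rw [Finset.mem_filter, Multiset.mem_toFinset, ← hpq.dvd_iff_dvd_left]
      exact ⟨hq, hpa⟩
  by_cases hpa : p ∣ a
  · rcases hp.dvd_or_dvd ((dvd_add_right hpa).mp hpak) with hpb | hpk'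
    · exact h p hp hpa hpb hpm
    · exact hpk.mp hpk' hpa
  · exact hpa ((dvd_add_left (dvd_mul_of_dvd_right (hpk.mpr hpa) b)).mp hpak)

theorem Matrix.gcd_dvd_gcd_mulVec {ι κ R : Type*} [Fintype ι] [Fintype κ] [CommRing R]
    [IsDomain R] [NormalizedGCDMonoid R] (A : Matrix κ ι R) (x : ι → R) :
    Finset.univ.gcd x ∣ Finset.univ.gcd (A *ᵥ x) :=
  Finset.dvd_gcd fun _ _ =>
    Finset.dvd_sum fun j _ => dvd_mul_of_dvd_right (Finset.gcd_dvd (Finset.mem_univ j)) _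

theorem Matrix.SpecialLinearGroup.gcd_smul {ι R : Type*} [Fintype ι] [DecidableEq ι]
    [CommRing R] [IsDomain R] [NormalizedGCDMonoid R] (g : SpecialLinearGroup ι R)
    (x : ι → R) : Finset.univ.gcd (g • x) = Finset.univ.gcd x := by
  refine dvd_antisymm_of_normalize_eq Finset.normalize_gcd Finset.normalize_gcd ?_
    (gcd_dvd_gcd_mulVec _ x)
  have h := gcd_dvd_gcd_mulVec ((g⁻¹ : SpecialLinearGroup ι R) : Matrix ι ι R) (g • x)
  rwa [← smul_eq_mulVec, ← SpecialLinearGroup.smul_def, inv_smul_smul] at h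

theorem Matrix.dvd_mulVec_apply {ι κ R : Type*} [Fintype ι] [CommRing R] {c : R}
    (A : Matrix κ ι R) {x : ι → R} (hx : ∀ j, c ∣ x j) (i : κ) : c ∣ (A *ᵥ x) i :=
  Finset.dvd_sum fun j _ => dvd_mul_of_dvd_right (hx j) _

theorem Matrix.dvd_mulVec_apply_sub_self {ι R : Type*} [Fintype ι] [DecidableEq ι]
    [CommRing R] {c : R} {A : Matrix ι ι R} (hA : ∀ i j, c ∣ A i j - (1 : Matrix ι ι R) i j)
    (x : ι → R) (i : ι) : c ∣ (A *ᵥ x) i - x i := by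
  rw [← Pi.sub_apply, show A *ᵥ x - x = (A - 1) *ᵥ x by rw [sub_mulVec, one_mulVec]]
  exact Finset.dvd_sum fun j _ => dvd_mul_of_dvd_left (hA i j) _

variable {ι : Type*} [Fintype ι] [DecidableEq ι]

variable (ι) in
def principalCongruenceSubgroup (N : ℕ) : Subgroup (SpecialLinearGroup ι ℤ) :=
  (SpecialLinearGroup.map (Int.castRingHom (ZMod N))).ker

namespace principalCongruenceSubgroup

variable {N : ℕ}

theorem mem_iff {g : SpecialLinearGroup ι ℤ} :
    g ∈ principalCongruenceSubgroup ι N ↔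
      ∀ i j, (N : ℤ) ∣ (g : Matrix ι ι ℤ) i j - (1 : Matrix ι ι ℤ) i j := by
  refine MonoidHom.mem_ker.trans <| Subtype.ext_iff.trans <| Matrix.ext_iff.symm.trans <|
    forall₂_congr fun i j => ?_
  change ((g i j : ℤ) : ZMod N) = (1 : Matrix ι ι (ZMod N)) i j ↔ _
  rw [← ZMod.intCast_eq_intCast_iff_dvd_sub, eq_comm, one_apply, one_apply]
  split_ifs <;> simp

theorem one_add_mem {X : Matrix ι ι ℤ} (hX : ∀ i j, (N : ℤ) ∣ X i j)
    (hdet : (1 + X).det = 1) :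
    (⟨1 + X, hdet⟩ : SpecialLinearGroup ι ℤ) ∈ principalCongruenceSubgroup ι N :=
  mem_iff.mpr fun i j => by
    change (N : ℤ) ∣ (1 + X) i j - (1 : Matrix ι ι ℤ) i j
    rw [Matrix.add_apply, add_sub_cancel_left]
    exact hX i j

theorem normal : (principalCongruenceSubgroup ι N).Normal :=
  MonoidHom.normal_ker _

theorem gcd_eq_of_mem_orbit {x y : ι → ℤ}
    (h : y ∈ orbit (principalCongruenceSubgroup ι N) x) :
    Finset.univ.gcd y = Finset.univ.gcd x := by
  obtain ⟨g, rfl⟩ := h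
  exact SpecialLinearGroup.gcd_smul (g : SpecialLinearGroup ι ℤ) x

theorem dvd_sub_of_mem_orbit {x y : ι → ℤ}
    (h : y ∈ orbit (principalCongruenceSubgroup ι N) x) {k : ι} {z : ℤ}
    (hx : (N : ℤ) ∣ x k - z) : (N : ℤ) ∣ y k - z := by
  obtain ⟨g, rfl⟩ := h
  have h := dvd_add (dvd_mulVec_apply_sub_self (mem_iff.mp g.2) x k) hx
  rwa [sub_add_sub_cancel] at h

theorem add_smul_mem_orbit {c r : ι → ℤ} (hc : ∀ i, (N : ℤ) ∣ c i) (hrc : r ⬝ᵥ c = 0)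
    (x : ι → ℤ) : x + (r ⬝ᵥ x) • c ∈ orbit (principalCongruenceSubgroup ι N) x := by
  have hdet : (1 + vecMulVec c r).det = 1 := by
    rw [vecMulVec_eq Unit, det_one_add_replicateCol_mul_replicateRow, hrc, add_zero]
  refine ⟨⟨_, one_add_mem (fun i j => dvd_mul_of_dvd_left (hc i) (r j)) hdet⟩, ?_⟩
  change (1 + vecMulVec c r) *ᵥ x = _
  rw [add_mulVec, one_mulVec, vecMulVec_mulVec, op_smul_eq_smul]

theorem add_single_mem_orbit {r : ι → ℤ} {j : ι} (hrj : r j = 0) (x : ι → ℤ) :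
    x + Pi.single j (N * (r ⬝ᵥ x)) ∈ orbit (principalCongruenceSubgroup ι N) x := by
  have hc : ∀ k, (N : ℤ) ∣ (Pi.single j (N : ℤ) : ι → ℤ) k := fun k => by
    rcases eq_or_ne k j with rfl | hk <;> simp [*]
  convert add_smul_mem_orbit (r := r) hc (by rw [dotProduct_single, hrj, zero_mul]) x using 2
  rw [← Pi.single_smul, smul_eq_mul, mul_comm]

theorem mulVec_mem_orbit_of_injective {m : Type*} [Fintype m] [DecidableEq m] {f : m → ι}
    (hf : Function.Injective f) {M : SpecialLinearGroup m ℤ}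
    (hM : M ∈ principalCongruenceSubgroup m N) (y : m → ℤ) :
    ((1 : Matrix ι ι ℤ).submatrix id f) *ᵥ ((M : Matrix m m ℤ) *ᵥ y) ∈
      orbit (principalCongruenceSubgroup ι N) (((1 : Matrix ι ι ℤ).submatrix id f) *ᵥ y) := by
  set E : Matrix ι m ℤ := (1 : Matrix ι ι ℤ).submatrix id f
  -- `1 + E (A - 1) Eᵀ` acts as `A` on the coordinates in the range of `f`, trivially elsewhere.
  have hA := mem_iff.mp hM
  have hAdet : (M : Matrix m m ℤ).det = 1 := M.2
  generalize (M : Matrix m m ℤ) = A at hA hAdet ⊢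
  have hEE : Eᵀ * E = 1 := by
    rw [transpose_submatrix, transpose_one, ← submatrix_mul _ _ _ _ _ Function.bijective_id,
      Matrix.mul_one, submatrix_one _ hf]
  have hdet : (1 + E * (A - 1) * Eᵀ).det = 1 := by
    rw [Matrix.mul_assoc, det_one_add_mul_comm, Matrix.mul_assoc, hEE, Matrix.mul_one,
      add_sub_cancel, hAdet]
  refine ⟨⟨_, one_add_mem (fun i j => ?_) hdet⟩, ?_⟩
  · rw [mul_apply]
    refine Finset.dvd_sum fun k _ => dvd_mul_of_dvd_left ?_ _
    exact Finset.dvd_sum fun l _ => dvd_mul_of_dvd_right (by simpa using hA l k) _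
  · change (1 + E * (A - 1) * Eᵀ) *ᵥ (E *ᵥ y) = _
    rw [mulVec_mulVec, Matrix.add_mul, Matrix.one_mul, Matrix.mul_assoc, hEE, Matrix.mul_one,
      Matrix.mul_sub, Matrix.mul_one, add_sub_cancel, mulVec_mulVec]

theorem exists_mem_orbit_apply_ne_zero {w : ι → ℤ} (hw : Finset.univ.gcd w = 1) {i : ι}
    (hwi : (N : ℤ) ∣ w i - 1) : ∃ w' ∈ orbit (principalCongruenceSubgroup ι N) w, w' i ≠ 0 := by
  by_cases hi : w i = 0
  swap
  · exact ⟨w, mem_orbit_self w, hi⟩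
  have hN : N ≠ 0 := by
    rintro rfl
    simp [hi] at hwi
  obtain ⟨l, hl⟩ : ∃ l, w l ≠ 0 := by
    by_contra! h0
    rw [Finset.gcd_eq_zero_iff.mpr fun l _ => h0 l] at hw
    exact zero_ne_one hw
  have hli : l ≠ i := by rintro rfl; exact hl hi
  refine ⟨_, add_single_mem_orbit (r := Pi.single l 1) (Pi.single_eq_of_ne' hli 1) w, ?_⟩
  simp [hi, hl, hN]

theorem exists_mem_orbit_isCoprime {i j : ι} (hij : i ≠ j) {w : ι → ℤ}
    (hw : Finset.univ.gcd w = 1) (hwi : (N : ℤ) ∣ w i - 1) (hwi₀ : w i ≠ 0) :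
    ∃ w' ∈ orbit (principalCongruenceSubgroup ι N) w, IsCoprime (w' i) (w' j) := by
  set S : Finset ι := {i, j}ᶜ
  have hS : ∀ {k}, k ∉ S ↔ k = i ∨ k = j := by
    simp only [S, Finset.mem_compl, Finset.mem_insert, Finset.mem_singleton, not_not, implies_true]
  obtain ⟨t, ht⟩ := S.gcd_eq_sum_mul w
  have hprime : ∀ p, Prime p → p ∣ w j → p ∣ N * S.gcd w → ¬p ∣ w i := by
    intro p hp hpj hpNg hpi
    rcases hp.dvd_or_dvd hpNg with hpN | hpg
    · exact hp.not_dvd_one (by simpa using dvd_sub hpi (hpN.trans hwi))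
    · refine hp.not_dvd_one (hw ▸ Finset.dvd_gcd fun k _ => ?_)
      by_cases hk : k ∈ S
      · exact hpg.trans (Finset.gcd_dvd hk)
      · rcases hS.mp hk with rfl | rfl <;> assumption
  obtain ⟨k, hk⟩ := exists_isCoprime_add_mul hwi₀ hprime
  set r : ι → ℤ := fun l => if l ∈ S then k * t l else 0
  have hr : r ⬝ᵥ w = k * S.gcd w := by
    simp only [dotProduct, r, ite_mul, zero_mul, Finset.sum_ite_mem, Finset.univ_inter, ht,
      Finset.mul_sum]
    exact Finset.sum_congr rfl fun l _ => by ring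
  refine ⟨_, add_single_mem_orbit (r := r) (j := j) (if_neg (hS.mpr (Or.inr rfl))) w, ?_⟩
  rw [Pi.add_apply, Pi.add_apply, Pi.single_eq_of_ne hij, Pi.single_eq_same, add_zero, hr,
    mul_comm k, ← mul_assoc]
  exact hk.symm

theorem single_add_single_mem_orbit_of_isCoprime {i j : ι} (hij : i ≠ j) {w : ι → ℤ}
    (hw : IsCoprime (w i) (w j)) (hdvd : ∀ k ≠ i, (N : ℤ) ∣ w k) :
    (Pi.single i (w i) + Pi.single j (w j) : ι → ℤ) ∈
      orbit (principalCongruenceSubgroup ι N) w := by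
  obtain ⟨α, β, hαβ⟩ := hw
  set c : ι → ℤ := fun k => if k = i ∨ k = j then 0 else -w k
  have hc : ∀ k, (N : ℤ) ∣ c k := fun k => by
    by_cases hk : k = i ∨ k = j
    · simp [c, hk]
    · simpa [c, hk] using hdvd k (fun h => hk (Or.inl h))
  have hrc : (Pi.single i α + Pi.single j β) ⬝ᵥ c = 0 := by
    simp [add_dotProduct, c]
  have hrw : (Pi.single i α + Pi.single j β) ⬝ᵥ w = 1 := by
    rw [add_dotProduct, single_dotProduct, single_dotProduct, hαβ]
  convert add_smul_mem_orbit hc hrc w using 1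
  rw [hrw, one_smul]
  ext k
  by_cases hki : k = i <;> by_cases hkj : k = j <;> simp [c, hki, hkj, hij, hij.symm]

theorem single_add_single_mem_orbit_single_one {i j : ι} (hij : i ≠ j) {a b : ℤ}
    (hab : IsCoprime a b) (ha : (N : ℤ) ∣ a - 1) (hb : (N : ℤ) ∣ b) :
    (Pi.single i a + Pi.single j b : ι → ℤ) ∈
      orbit (principalCongruenceSubgroup ι N) (Pi.single i 1 : ι → ℤ) := by
  obtain ⟨α, β, hαβ⟩ := hab
  set M : Matrix (Fin 2) (Fin 2) ℤ := !![a, (a - 1) * β; b, α + β * b]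
  have hdet : M.det = 1 := by rw [det_fin_two_of]; linear_combination hαβ
  have hM : (⟨M, hdet⟩ : SpecialLinearGroup (Fin 2) ℤ) ∈
      principalCongruenceSubgroup (Fin 2) N := by
    refine mem_iff.mpr fun s t => ?_
    have hQ : α + β * b - 1 = (a - 1) * -α := by linear_combination hαβ
    fin_cases s <;> fin_cases t
    · simpa [M] using ha
    · simpa [M] using dvd_mul_of_dvd_left ha β
    · simpa [M] using hb
    · simpa [M, hQ] using dvd_mul_of_dvd_left ha (-α)
  convert mulVec_mem_orbit_of_injective (injective_pair_iff_ne.mpr hij) hM ![1, 0] using 2 <;>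
    ext k <;> by_cases hki : k = i <;> by_cases hkj : k = j <;>
    simp [mulVec, dotProduct, Fin.sum_univ_two, M, one_apply, hki, hkj, hij, hij.symm]

theorem mem_orbit_single_one [Nontrivial ι] {w : ι → ℤ} (hw : Finset.univ.gcd w = 1) {i : ι}
    (hwe : ∀ k, (N : ℤ) ∣ w k - (Pi.single i 1 : ι → ℤ) k) :
    w ∈ orbit (principalCongruenceSubgroup ι N) (Pi.single i 1 : ι → ℤ) := by
  obtain ⟨j, hji⟩ := exists_ne i
  have hwi : (N : ℤ) ∣ w i - 1 := by simpa using hwe i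
  obtain ⟨w₁, hw₁, hw₁i⟩ := exists_mem_orbit_apply_ne_zero hw hwi
  obtain ⟨w₂, hw₂, hcop⟩ := exists_mem_orbit_isCoprime hji.symm
    ((gcd_eq_of_mem_orbit hw₁).trans hw) (dvd_sub_of_mem_orbit hw₁ hwi) hw₁i
  have hw₂e : ∀ k, (N : ℤ) ∣ w₂ k - (Pi.single i 1 : ι → ℤ) k := fun k =>
    dvd_sub_of_mem_orbit hw₂ (dvd_sub_of_mem_orbit hw₁ (hwe k))
  have hw₂k : ∀ k ≠ i, (N : ℤ) ∣ w₂ k := fun k hk => by simpa [hk] using hw₂e k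
  have h₃ := single_add_single_mem_orbit_of_isCoprime hji.symm hcop hw₂k
  have h₄ := single_add_single_mem_orbit_single_one hji.symm hcop (by simpa using hw₂e i)
    (hw₂k j hji)
  rw [← orbit_eq_iff] at hw₁ hw₂ h₃ h₄ ⊢
  rw [← hw₁, ← hw₂, ← h₃, h₄]

theorem mem_orbit_of_dvd_sub [Nontrivial ι] {u v : ι → ℤ} (hu : Finset.univ.gcd u = 1)
    (hv : Finset.univ.gcd v = 1) (huv : ∀ i, (N : ℤ) ∣ u i - v i) :
    v ∈ orbit (principalCongruenceSubgroup ι N) u := by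
  obtain ⟨i⟩ : Nonempty ι := inferInstance
  obtain ⟨⟨a, _⟩, hau⟩ :=
    mem_orbit_iff.mp (mem_orbit_single_one (N := 1) (i := i) hu fun k => by simp)
  rw [Subgroup.mk_smul] at hau
  obtain ⟨⟨h, hh⟩, hhv⟩ := mem_orbit_iff.mp <| mem_orbit_single_one (w := a⁻¹ • v) (i := i)
    (by rw [SpecialLinearGroup.gcd_smul, hv]) fun k => by
      rw [eq_inv_smul_iff.mpr hau, ← Pi.sub_apply, ← smul_sub]
      exact dvd_mulVec_apply _ (fun j => dvd_sub_comm.mp (huv j)) k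
  refine mem_orbit_iff.mpr ⟨⟨a * h * a⁻¹, normal.conj_mem h hh a⟩, ?_⟩
  rw [Subgroup.mk_smul] at hhv ⊢
  rw [← hau, mul_smul, mul_smul, inv_smul_smul, hhv, smul_inv_smul]

end principalCongruenceSubgroup

theorem stmt_2_general (n N : ℕ) (hn : 2 ≤ n) (u v : Fin n → ℤ)
    (hu : Finset.univ.gcd u = 1) (hv : Finset.univ.gcd v = 1)
    (huv : ∀ i, (N : ℤ) ∣ (u i - v i)) :
    ∃ g : Matrix.SpecialLinearGroup (Fin n) ℤ,
      (∀ i j, (N : ℤ) ∣ ((g : Matrix (Fin n) (Fin n) ℤ) i j -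
        (1 : Matrix (Fin n) (Fin n) ℤ) i j)) ∧
      (g : Matrix (Fin n) (Fin n) ℤ).mulVec u = v := by
  have : Nontrivial (Fin n) := Fin.nontrivial_iff_two_le.mpr hn
  obtain ⟨g, hg⟩ := mem_orbit_iff.mp (principalCongruenceSubgroup.mem_orbit_of_dvd_sub hu hv huv)
  exact ⟨g, principalCongruenceSubgroup.mem_iff.mp g.2, hg⟩

/-- Let `n ≥ 2`, `N ≥ 1`, and let `u, v ∈ ℤⁿ` be primitive vectors (gcd of
coordinates equal to `1`) with `u ≡ v (mod N)` coordinatewise.  Then there is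
`g ∈ SL_n(ℤ)` congruent to the identity matrix modulo `N` entrywise with `g · u = v`. -/
theorem stmt_2 (n N : ℕ) (hn : 2 ≤ n) (hN : 1 ≤ N) (u v : Fin n → ℤ)
    (hu : Finset.univ.gcd u = 1) (hv : Finset.univ.gcd v = 1)
    (huv : ∀ i, (N : ℤ) ∣ (u i - v i)) :
    ∃ g : Matrix.SpecialLinearGroup (Fin n) ℤ,
      (∀ i j, (N : ℤ) ∣ ((g : Matrix (Fin n) (Fin n) ℤ) i j -
        (1 : Matrix (Fin n) (Fin n) ℤ) i j)) ∧
      (g : Matrix (Fin n) (Fin n) ℤ).mulVec u = v :=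
  stmt_2_general n N hn u v hu hv huv
end

section
/- Let N be a positive integer. For every primitive vector v ∈ ℤ³ there exist a positive divisor d of N, a matrix γ ∈ Γ₀(N,3), and a sign s ∈ {1,−1} such that γ·v = s·(1,d,0)ᵀ. Moreover d is uniquely determined by v: if d and d′ are positive divisors of N and some elements of Γ₀(N,3) carry v to ±(1,d,0)ᵀ and to ±(1,d′,0)ᵀ respectively, then d = d′. (Equivalently, the Γ₀(N,3)-orbits of lines in ℚ³ are in one-to-one correspondence with the positive divisors of N, the line for d being spanned by (1,d,0)ᵀ.) -/
/-- Membership in `Γ₀(N,3)`: an element of `SL₃(ℤ)` whose `(2,1)` and `(3,1)` entries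
(`1`-indexed), i.e. the entries `(1,0)` and `(2,0)` in `0`-indexed notation, are divisible
by `N`. -/
def InGamma0 (N : ℕ) (γ : Matrix.SpecialLinearGroup (Fin 3) ℤ) : Prop :=
  (N : ℤ) ∣ (γ : Matrix (Fin 3) (Fin 3) ℤ) 1 0 ∧
  (N : ℤ) ∣ (γ : Matrix (Fin 3) (Fin 3) ℤ) 2 0

/-- `γ` carries the vector `v` to `± w`. -/
def CarriesTo (γ : Matrix.SpecialLinearGroup (Fin 3) ℤ) (v w : Fin 3 → ℤ) : Prop :=
  ∃ s : ℤ, (s = 1 ∨ s = -1) ∧ (γ : Matrix (Fin 3) (Fin 3) ℤ).mulVec v = s • w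

/-!
The orbit of a vector `v` is labelled by `gcd(N, v₂, v₃)`. For `γ ∈ Γ₀(N,3)` the last two
entries of `γ v` are integer combinations of `N v₁, v₂, v₃`, so this gcd can only grow along an
orbit and is therefore constant on it; at `±(1, d, 0)` with `d ∣ N` it equals `d`, which gives
uniqueness. For existence, an `SL₂(ℤ)` block moves a primitive `v` to `(a, g, 0)` with
`g = gcd(v₂, v₃)` prime to `a`. Adding a multiple of `g` to `a` makes `a` prime to `N`, the
shear `(a, g, 0) ↦ (a, g, N a)` followed by Euclid gives `(a, gcd(g, N), 0)`, and a Bézout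
relation `x a + y N = 1` yields an element of `Γ₀(N,3)` carrying `(a, d, 0)` to `(1, d, 0)`.
-/

open MulAction
open scoped MatrixGroups

lemma Int.exists_isCoprime_add_mul {a g n : ℤ} (hn : n ≠ 0) (h : IsCoprime a g) :
    ∃ t, IsCoprime (a + t * g) n := by
  classical
  -- A prime `p ∣ n` divides `t` exactly when it does not divide `a`; if `p ∣ a` then `p ∤ g`.
  set t : ℤ := ∏ p ∈ n.natAbs.primeFactors with ¬((p : ℕ) : ℤ) ∣ a, (p : ℤ)
  have dvd_t_iff {p : ℕ} (hp : p.Prime) (hpn : p ∣ n.natAbs) : (p : ℤ) ∣ t ↔ ¬(p : ℤ) ∣ a := by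
    constructor
    · intro hpt
      obtain ⟨q, hq, hpq⟩ := ((Nat.prime_iff_prime_int.mp hp).dvd_finsetProd_iff _).mp hpt
      rw [Finset.mem_filter, Nat.mem_primeFactors] at hq
      rw [(Nat.prime_dvd_prime_iff_eq hp hq.1.1).mp (Int.natCast_dvd_natCast.mp hpq)]
      exact hq.2
    · intro hpa
      exact Finset.dvd_prod_of_mem _ <|
        Finset.mem_filter.mpr ⟨Nat.mem_primeFactors.mpr ⟨hp, hpn, by simpa using hn⟩, hpa⟩
  refine ⟨t, isCoprime_of_prime_dvd (fun h0 ↦ hn h0.2) fun z hz hza hzn ↦ ?_⟩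
  rw [← Int.natAbs_dvd] at hza hzn
  have hp := Int.prime_iff_natAbs_prime.mp hz
  have hzt := dvd_t_iff hp (Int.natCast_dvd.mp hzn)
  replace hz := Nat.prime_iff_prime_int.mp hp
  by_cases hza' : (z.natAbs : ℤ) ∣ a
  · rcases hz.dvd_or_dvd ((dvd_add_right hza').mp hza) with hzt' | hzg
    · exact hzt.mp hzt' hza'
    · exact hz.not_isUnit (h.isUnit_of_dvd' hza' hzg)
  · exact hza' ((dvd_add_left ((hzt.mpr hza').mul_right g)).mp hza)

lemma isCoprime_gcd_of_univ_gcd_eq_one {v : Fin 3 → ℤ} (hv : Finset.univ.gcd v = 1) :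
    IsCoprime (v 0) (Int.gcd (v 1) (v 2)) := by
  rw [Int.isCoprime_iff_gcd_eq_one, ← Nat.dvd_one, ← Int.natCast_dvd_natCast, Nat.cast_one, ← hv]
  refine Finset.dvd_gcd fun i _ ↦ ?_
  fin_cases i
  · exact Int.gcd_dvd_left _ _
  · exact (Int.gcd_dvd_right _ _).trans (Int.gcd_dvd_left _ _)
  · exact (Int.gcd_dvd_right _ _).trans (Int.gcd_dvd_right _ _)

def Gamma0Three (N : ℕ) : Subgroup SL(3, ℤ) where
  carrier := {γ | InGamma0 N γ}
  one_mem' := by simp [InGamma0]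
  mul_mem' {γ δ} := by
    rintro ⟨hγ₁, hγ₂⟩ ⟨hδ₁, hδ₂⟩
    change InGamma0 N (γ * δ)
    simp only [InGamma0, Matrix.SpecialLinearGroup.coe_mul, Matrix.mul_apply,
      Fin.sum_univ_three]
    exact ⟨dvd_add (dvd_add (hγ₁.mul_right _) (hδ₁.mul_left _)) (hδ₂.mul_left _),
      dvd_add (dvd_add (hγ₂.mul_right _) (hδ₁.mul_left _)) (hδ₂.mul_left _)⟩
  inv_mem' {γ} := by
    rintro ⟨hγ₁, hγ₂⟩
    change InGamma0 N γ⁻¹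
    simp only [InGamma0, Matrix.SpecialLinearGroup.coe_inv, Matrix.adjugate_fin_three,
      Matrix.of_apply, Matrix.cons_val', Matrix.cons_val_zero, Matrix.cons_val_fin_one,
      Matrix.cons_val_one, Matrix.cons_val]
    exact ⟨dvd_add ((hγ₁.mul_right _).neg_right) (hγ₂.mul_left _),
      dvd_sub (hγ₁.mul_right _) (hγ₂.mul_left _)⟩

namespace Gamma0Three

variable {N : ℕ}

lemma orbit_eq_of_mulVec_eq {v w : Fin 3 → ℤ} (M : Matrix (Fin 3) (Fin 3) ℤ)
    (hdet : M.det = 1) (h₁ : (N : ℤ) ∣ M 1 0) (h₂ : (N : ℤ) ∣ M 2 0) (h : M.mulVec v = w) :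
    orbit (Gamma0Three N) w = orbit (Gamma0Three N) v :=
  orbit_eq_iff.mpr ⟨⟨⟨M, hdet⟩, h₁, h₂⟩, h⟩

variable (N)

lemma orbit_mul_isCoprime {b c : ℤ} (h : IsCoprime b c) (a g : ℤ) :
    orbit (Gamma0Three N) ![a, g, 0] = orbit (Gamma0Three N) ![a, g * b, g * c] := by
  obtain ⟨x, y, hxy⟩ := h
  refine orbit_eq_of_mulVec_eq !![1, 0, 0; 0, x, y; 0, -c, b] ?_ (by simp) (by simp) ?_
  · simp only [Matrix.det_fin_three, Matrix.of_apply, Matrix.cons_val', Matrix.cons_val_zero,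
      Matrix.cons_val_one, Matrix.cons_val_two, Matrix.empty_val', Matrix.cons_val_fin_one,
      Matrix.head_cons, Matrix.tail_cons, Matrix.head_fin_const]
    linear_combination hxy
  · simp only [Matrix.cons_mulVec, Matrix.empty_mulVec, Matrix.vec3_dotProduct,
      Matrix.cons_val_zero, Matrix.cons_val_one, Matrix.cons_val_two, Matrix.head_cons,
      Matrix.tail_cons]
    exact Matrix.vec3_eq (by ring) (by linear_combination g * hxy) (by ring)

lemma orbit_gcd (a b c : ℤ) :
    orbit (Gamma0Three N) ![a, (Int.gcd b c : ℤ), 0] = orbit (Gamma0Three N) ![a, b, c] := by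
  by_cases h0 : Int.gcd b c = 0
  · obtain ⟨rfl, rfl⟩ := Int.gcd_eq_zero_iff.mp h0
    simp
  · obtain ⟨b', c', hcop, hb, hc⟩ := Int.exists_gcd_one (Nat.pos_of_ne_zero h0)
    rw [orbit_mul_isCoprime N (Int.isCoprime_iff_gcd_eq_one.mpr hcop), mul_comm _ b',
      mul_comm _ c', ← hb, ← hc]

lemma orbit_add_mul (a g t : ℤ) :
    orbit (Gamma0Three N) ![a + t * g, g, 0] = orbit (Gamma0Three N) ![a, g, 0] := by
  refine orbit_eq_of_mulVec_eq !![1, t, 0; 0, 1, 0; 0, 0, 1] ?_ (by simp) (by simp) ?_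
  · simp [Matrix.det_fin_three]
  · simp only [Matrix.cons_mulVec, Matrix.empty_mulVec, Matrix.vec3_dotProduct,
      Matrix.cons_val_zero, Matrix.cons_val_one, Matrix.cons_val_two, Matrix.head_cons,
      Matrix.tail_cons]
    exact Matrix.vec3_eq (by ring) (by ring) (by ring)

lemma orbit_shear (a g : ℤ) :
    orbit (Gamma0Three N) ![a, g, N * a] = orbit (Gamma0Three N) ![a, g, 0] := by
  refine orbit_eq_of_mulVec_eq !![1, 0, 0; 0, 1, 0; (N : ℤ), 0, 1] ?_ (by simp) (by simp) ?_
  · simp [Matrix.det_fin_three]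
  · simp only [Matrix.cons_mulVec, Matrix.empty_mulVec, Matrix.vec3_dotProduct,
      Matrix.cons_val_zero, Matrix.cons_val_one, Matrix.cons_val_two, Matrix.head_cons,
      Matrix.tail_cons]
    exact Matrix.vec3_eq (by ring) (by ring) (by ring)

lemma orbit_one_of_isCoprime {a : ℤ} (ha : IsCoprime a N) {d n : ℤ} (hdn : d * n = N) :
    orbit (Gamma0Three N) ![1, d, 0] = orbit (Gamma0Three N) ![a, d, 0] := by
  obtain ⟨x, y, hxy⟩ := ha
  refine orbit_eq_of_mulVec_eq !![x, y * n, y; 0, 1, 0; -(N : ℤ), a * n, a] ?_ (by simp)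
    (by simp) ?_
  · simp only [Matrix.det_fin_three, Matrix.of_apply, Matrix.cons_val', Matrix.cons_val_zero,
      Matrix.cons_val_one, Matrix.cons_val_two, Matrix.empty_val', Matrix.cons_val_fin_one,
      Matrix.head_cons, Matrix.tail_cons, Matrix.head_fin_const]
    linear_combination hxy
  · simp only [Matrix.cons_mulVec, Matrix.empty_mulVec, Matrix.vec3_dotProduct,
      Matrix.cons_val_zero, Matrix.cons_val_one, Matrix.cons_val_two, Matrix.head_cons,
      Matrix.tail_cons]
    exact Matrix.vec3_eq (by linear_combination hxy + y * hdn) (by ring)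
      (by linear_combination a * hdn)

variable {N}

def orbitDivisor (N : ℕ) (v : Fin 3 → ℤ) : ℕ :=
  Nat.gcd N (Int.gcd (v 1) (v 2))

lemma orbitDivisor_dvd_smul {γ : SL(3, ℤ)} (hγ : γ ∈ Gamma0Three N) (v : Fin 3 → ℤ) :
    orbitDivisor N v ∣ orbitDivisor N (γ • v) := by
  have hN : (orbitDivisor N v : ℤ) ∣ N := Int.natCast_dvd_natCast.mpr (Nat.gcd_dvd_left _ _)
  have hg : (orbitDivisor N v : ℤ) ∣ Int.gcd (v 1) (v 2) :=
    Int.natCast_dvd_natCast.mpr (Nat.gcd_dvd_right _ _)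
  have hv₁ := hg.trans (Int.gcd_dvd_left _ _)
  have hv₂ := hg.trans (Int.gcd_dvd_right _ _)
  have dvd_smul_apply {i : Fin 3} (hi : (N : ℤ) ∣ (γ : Matrix (Fin 3) (Fin 3) ℤ) i 0) :
      (orbitDivisor N v : ℤ) ∣ (γ • v) i := by
    simp only [Matrix.SpecialLinearGroup.smul_def, Matrix.smul_eq_mulVec, Matrix.mulVec,
      dotProduct, Fin.sum_univ_three]
    exact dvd_add (dvd_add ((hN.trans hi).mul_right _) (hv₁.mul_left _)) (hv₂.mul_left _)
  exact Nat.dvd_gcd (Nat.gcd_dvd_left _ _) (Int.dvd_gcd (dvd_smul_apply hγ.1) (dvd_smul_apply hγ.2))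

lemma orbitDivisor_smul {γ : SL(3, ℤ)} (hγ : γ ∈ Gamma0Three N) (v : Fin 3 → ℤ) :
    orbitDivisor N (γ • v) = orbitDivisor N v := by
  refine Nat.dvd_antisymm ?_ (orbitDivisor_dvd_smul hγ v)
  simpa using orbitDivisor_dvd_smul (inv_mem hγ) (γ • v)

lemma orbitDivisor_eq_of_carriesTo {γ : SL(3, ℤ)} (hγ : γ ∈ Gamma0Three N) {v : Fin 3 → ℤ}
    {d : ℕ} (hd : d ∣ N) (h : CarriesTo γ v ![1, (d : ℤ), 0]) : orbitDivisor N v = d := by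
  obtain ⟨s, hs, hγv⟩ := h
  rw [← orbitDivisor_smul hγ v, Matrix.SpecialLinearGroup.smul_def, Matrix.smul_eq_mulVec, hγv]
  rcases hs with rfl | rfl <;> simp [orbitDivisor, Nat.gcd_eq_right hd]

lemma orbit_representative_eq (hN : N ≠ 0) {v : Fin 3 → ℤ} (hv : Finset.univ.gcd v = 1) :
    orbit (Gamma0Three N) ![1, (orbitDivisor N v : ℤ), 0] = orbit (Gamma0Three N) v := by
  set g : ℤ := (Int.gcd (v 1) (v 2) : ℤ)
  set d := orbitDivisor N v
  have hg : IsCoprime (v 0) g := isCoprime_gcd_of_univ_gcd_eq_one hv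
  obtain ⟨t, ht⟩ := Int.exists_isCoprime_add_mul (Int.natCast_ne_zero.mpr hN) hg
  set a := v 0 + t * g
  have hag : Nat.Coprime a.natAbs (Int.gcd (v 1) (v 2)) := by
    simpa [g] using Int.isCoprime_iff_nat_coprime.mp (hg.add_mul_right_left t)
  have hd : Int.gcd g (N * a) = d := by
    rw [Int.gcd_eq_natAbs, Int.natAbs_mul, Int.natAbs_natCast, Int.natAbs_natCast,
      hag.gcd_mul_right_cancel_right, Nat.gcd_comm]
    rfl
  obtain ⟨n, hn⟩ : d ∣ N := Nat.gcd_dvd_left _ _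
  calc orbit (Gamma0Three N) ![1, (d : ℤ), 0]
      = orbit (Gamma0Three N) ![a, (d : ℤ), 0] :=
        orbit_one_of_isCoprime N ht (n := n) (by simp [hn])
    _ = orbit (Gamma0Three N) ![a, g, N * a] := by rw [← hd, orbit_gcd]
    _ = orbit (Gamma0Three N) ![v 0, g, 0] := by rw [orbit_shear, orbit_add_mul]
    _ = orbit (Gamma0Three N) ![v 0, v 1, v 2] := orbit_gcd N _ _ _
    _ = orbit (Gamma0Three N) v := by congr; ext i; fin_cases i <;> rfl

end Gamma0Three

open Gamma0Three

/-- **Statement 3.** For every primitive `v ∈ ℤ³` there are a positive divisor `d` of `N`,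
a matrix `γ ∈ Γ₀(N,3)` and a sign `s` with `γ · v = s • (1,d,0)ᵀ`; moreover `d` is uniquely
determined by `v`. -/
theorem stmt_3 (N : ℕ) (hN : 0 < N) :
    (∀ v : Fin 3 → ℤ, Finset.univ.gcd v = 1 →
      ∃ d : ℕ, 0 < d ∧ d ∣ N ∧ ∃ γ, InGamma0 N γ ∧ CarriesTo γ v ![1, (d : ℤ), 0]) ∧
    (∀ v : Fin 3 → ℤ, Finset.univ.gcd v = 1 →
      ∀ d d' : ℕ, 0 < d → d ∣ N → 0 < d' → d' ∣ N →
      (∃ γ, InGamma0 N γ ∧ CarriesTo γ v ![1, (d : ℤ), 0]) →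
      (∃ γ, InGamma0 N γ ∧ CarriesTo γ v ![1, (d' : ℤ), 0]) → d = d') := by
  refine ⟨fun v hv ↦ ⟨orbitDivisor N v, Nat.gcd_pos_of_pos_left _ hN, Nat.gcd_dvd_left _ _, ?_⟩,
    fun v _ d d' _ hd _ hd' ⟨γ, hγ, h⟩ ⟨γ', hγ', h'⟩ ↦ ?_⟩
  · obtain ⟨⟨γ, hγ⟩, hγv⟩ := orbit_eq_iff.mp (orbit_representative_eq hN.ne' hv)
    exact ⟨γ, hγ, 1, Or.inl rfl, by rw [one_smul]; exact hγv⟩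
  · rw [← orbitDivisor_eq_of_carriesTo hγ hd h, orbitDivisor_eq_of_carriesTo hγ' hd' h']
end

section
/- Let E = ℚ(√D) be a real quadratic field (D > 1 squarefree), let β ∈ E \ ℚ, and let b = (β,1,0)ᵀ ∈ E³. For M ∈ SL₃(ℤ) the following are equivalent: (i) there exists λ ∈ E with M·b = λ·b; (ii) M₃₁ = M₃₂ = 0 and there exists λ ∈ E with M₁₁β + M₁₂ = λβ and M₂₁β + M₂₂ = λ. Moreover, if these hold, then λ is a unit of the ring of integers 𝓞_E, the upper-left 2×2 block h = [[M₁₁,M₁₂],[M₂₁,M₂₂]] has det h = ±1, and M₃₃ = ±1. -/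
/-!
Since `β` is irrational, an integer relation `aβ + b = 0` forces `a = b = 0`; the third row of
`M·b = λb` is such a relation, so `M₃₁ = M₃₂ = 0` and `det M = det h · M₃₃`, whence both factors
are `±1`. Eliminating `β` from the first two rows shows that `λ` is a root of the characteristic
polynomial `X² - tr(h) X + det h` of `h`, which is monic over `ℤ` with unit constant term, so `λ`
and `λ⁻¹` are algebraic integers.
-/

open Polynomial Matrix

lemma int_eq_zero_of_mul_add_eq_zero {E : Type*} [Field E] [Algebra ℚ E]
    {β : E} (hβ : β ∉ Set.range (algebraMap ℚ E)) {a b : ℤ}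
    (h : (a : E) * β + b = 0) : a = 0 ∧ b = 0 := by
  have : CharZero E := charZero_of_injective_algebraMap (algebraMap ℚ E).injective
  obtain rfl | ha := eq_or_ne a 0
  · simpa using h
  · refine absurd ⟨-b / a, ?_⟩ hβ
    rw [map_div₀, map_neg, map_intCast, map_intCast, div_eq_iff (Int.cast_ne_zero.mpr ha)]
    linear_combination -h

lemma mulVec_vecCons_zero_eq_smul_iff {R : Type*} [Semiring R]
    (B : Matrix (Fin 3) (Fin 3) R) (x y lam : R) :
    B *ᵥ ![x, y, 0] = lam • ![x, y, 0] ↔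
      B 0 0 * x + B 0 1 * y = lam * x ∧ B 1 0 * x + B 1 1 * y = lam * y ∧
        B 2 0 * x + B 2 1 * y = 0 := by
  simp [funext_iff, Fin.forall_fin_succ, mulVec, dotProduct, Fin.sum_univ_three]

lemma det_fin_three_of_row_two_eq_zero {R : Type*} [CommRing R]
    (A : Matrix (Fin 3) (Fin 3) R) (h0 : A 2 0 = 0) (h1 : A 2 1 = 0) :
    A.det = (of fun i j : Fin 2 => A i.castSucc j.castSucc).det * A 2 2 := by
  rw [det_fin_three, det_fin_two, h0, h1]
  simp only [of_apply, Fin.castSucc_zero, Fin.castSucc_one]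
  ring

lemma sq_sub_trace_mul_add_det_eq_zero {R : Type*} [CommRing R] {a b c d β lam : R}
    (h₀ : a * β + b = lam * β) (h₁ : c * β + d = lam) :
    lam ^ 2 - (a + d) * lam + (a * d - b * c) = 0 := by
  linear_combination -c * h₀ + (a - lam) * h₁

lemma isIntegral_of_sq_sub_mul_add_eq_zero {R : Type*} [CommRing R] {x : R} (t d : ℤ)
    (h : x ^ 2 - t * x + d = 0) : IsIntegral ℤ x := by
  refine ⟨X ^ 2 - C t * X + C d, by monicity!, ?_⟩
  simpa [Polynomial.eval₂_eq_eval_map] using h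

lemma isIntegral_inv_of_sq_sub_mul_add_eq_zero {E : Type*} [Field E] {x : E} (t δ : ℤ)
    (hδ : δ = 1 ∨ δ = -1) (h : x ^ 2 - t * x + δ = 0) : IsIntegral ℤ x⁻¹ := by
  have hx : x ≠ 0 := by
    rintro rfl
    rcases hδ with rfl | rfl <;> norm_num at h
  -- dividing by `δ x²` turns `x² - t x + δ` into `x⁻² - tδ x⁻¹ + δ`, as `δ⁻¹ = δ`
  refine isIntegral_of_sq_sub_mul_add_eq_zero (t * δ) δ ?_
  field_simp
  rcases hδ with rfl | rfl <;> push_cast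
  · linear_combination h
  · linear_combination -h

theorem stmt_11_general (E : Type*) [Field E] [Algebra ℚ E]
    (β : E) (hβ : β ∉ Set.range (algebraMap ℚ E))
    (M : Matrix.SpecialLinearGroup (Fin 3) ℤ) :
    ((∃ lam : E, ((M : Matrix (Fin 3) (Fin 3) ℤ).map ((↑) : ℤ → E)).mulVec ![β, 1, 0] =
        lam • ![β, 1, 0]) ↔
      ((M : Matrix (Fin 3) (Fin 3) ℤ) 2 0 = 0 ∧ (M : Matrix (Fin 3) (Fin 3) ℤ) 2 1 = 0 ∧
        ∃ lam : E,
          ((M : Matrix (Fin 3) (Fin 3) ℤ) 0 0 : E) * β +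
            ((M : Matrix (Fin 3) (Fin 3) ℤ) 0 1 : E) = lam * β ∧
          ((M : Matrix (Fin 3) (Fin 3) ℤ) 1 0 : E) * β +
            ((M : Matrix (Fin 3) (Fin 3) ℤ) 1 1 : E) = lam)) ∧
    (∀ lam : E,
      ((M : Matrix (Fin 3) (Fin 3) ℤ).map ((↑) : ℤ → E)).mulVec ![β, 1, 0] =
        lam • ![β, 1, 0] →
      (IsIntegral ℤ lam ∧ IsIntegral ℤ lam⁻¹) ∧
      ((Matrix.of fun i j : Fin 2 =>
          (M : Matrix (Fin 3) (Fin 3) ℤ) i.castSucc j.castSucc).det = 1 ∨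
       (Matrix.of fun i j : Fin 2 =>
          (M : Matrix (Fin 3) (Fin 3) ℤ) i.castSucc j.castSucc).det = -1) ∧
      ((M : Matrix (Fin 3) (Fin 3) ℤ) 2 2 = 1 ∨ (M : Matrix (Fin 3) (Fin 3) ℤ) 2 2 = -1)) := by
  set A : Matrix (Fin 3) (Fin 3) ℤ := (M : Matrix (Fin 3) (Fin 3) ℤ)
  have eigen (lam : E) : (A.map ((↑) : ℤ → E)) *ᵥ ![β, 1, 0] = lam • ![β, 1, 0] ↔
      (A 0 0 : E) * β + A 0 1 = lam * β ∧ (A 1 0 : E) * β + A 1 1 = lam ∧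
        (A 2 0 = 0 ∧ A 2 1 = 0) := by
    rw [mulVec_vecCons_zero_eq_smul_iff]
    simp only [map_apply, mul_one]
    exact and_congr_right' <| and_congr_right' ⟨int_eq_zero_of_mul_add_eq_zero hβ,
      fun ⟨h₀, h₁⟩ => by simp [h₀, h₁]⟩
  refine ⟨⟨fun ⟨lam, h⟩ => ?_, fun ⟨h₀, h₁, lam, h⟩ => ⟨lam, (eigen lam).2 ⟨h.1, h.2, h₀, h₁⟩⟩⟩,
    fun lam h => ?_⟩
  · obtain ⟨h₀, h₁, h₂, h₃⟩ := (eigen lam).1 h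
    exact ⟨h₂, h₃, lam, h₀, h₁⟩
  obtain ⟨h₀, h₁, h₂, h₃⟩ := (eigen lam).1 h
  have hdet : A.det = 1 := M.2
  rw [det_fin_three_of_row_two_eq_zero A h₂ h₃] at hdet
  have hunit := Int.isUnit_iff.1 (IsUnit.of_mul_eq_one _ hdet)
  have hchar : lam ^ 2 - ((A 0 0 + A 1 1 : ℤ) : E) * lam +
      ((of fun i j : Fin 2 => A i.castSucc j.castSucc).det : E) = 0 := by
    rw [det_fin_two]
    simp only [of_apply, Fin.castSucc_zero, Fin.castSucc_one]
    push_cast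
    exact sq_sub_trace_mul_add_det_eq_zero h₀ h₁
  exact ⟨⟨isIntegral_of_sq_sub_mul_add_eq_zero _ _ hchar,
    isIntegral_inv_of_sq_sub_mul_add_eq_zero _ _ hunit hchar⟩,
    hunit, Int.isUnit_iff.1 (IsUnit.of_mul_eq_one_right _ hdet)⟩

/-- Let `E` be a real quadratic field (a `ℚ`-algebra which is a field of
degree `2` over `ℚ`, equipped with an embedding into `ℝ`), let `β ∈ E \ ℚ` and let
`b = (β,1,0)ᵀ ∈ E³`.  For `M ∈ SL₃(ℤ)` the following are equivalent:
(i) `M·b = λ•b` for some `λ ∈ E`;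
(ii) `M₃₁ = M₃₂ = 0` and there is `λ ∈ E` with `M₁₁β + M₁₂ = λβ` and `M₂₁β + M₂₂ = λ`.
Moreover, if these hold then `λ` is a unit of the ring of integers of `E`, the upper-left
`2×2` block of `M` has determinant `±1`, and `M₃₃ = ±1`. -/
theorem stmt_11 (E : Type*) [Field E] [Algebra ℚ E]
    (hquad : Module.finrank ℚ E = 2) (φ : E →+* ℝ)
    (β : E) (hβ : β ∉ Set.range (algebraMap ℚ E))
    (M : Matrix.SpecialLinearGroup (Fin 3) ℤ) :
    ((∃ lam : E, ((M : Matrix (Fin 3) (Fin 3) ℤ).map ((↑) : ℤ → E)).mulVec ![β, 1, 0] =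
        lam • ![β, 1, 0]) ↔
      ((M : Matrix (Fin 3) (Fin 3) ℤ) 2 0 = 0 ∧ (M : Matrix (Fin 3) (Fin 3) ℤ) 2 1 = 0 ∧
        ∃ lam : E,
          ((M : Matrix (Fin 3) (Fin 3) ℤ) 0 0 : E) * β +
            ((M : Matrix (Fin 3) (Fin 3) ℤ) 0 1 : E) = lam * β ∧
          ((M : Matrix (Fin 3) (Fin 3) ℤ) 1 0 : E) * β +
            ((M : Matrix (Fin 3) (Fin 3) ℤ) 1 1 : E) = lam)) ∧
    (∀ lam : E,
      ((M : Matrix (Fin 3) (Fin 3) ℤ).map ((↑) : ℤ → E)).mulVec ![β, 1, 0] =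
        lam • ![β, 1, 0] →
      (IsIntegral ℤ lam ∧ IsIntegral ℤ lam⁻¹) ∧
      ((Matrix.of fun i j : Fin 2 =>
          (M : Matrix (Fin 3) (Fin 3) ℤ) i.castSucc j.castSucc).det = 1 ∨
       (Matrix.of fun i j : Fin 2 =>
          (M : Matrix (Fin 3) (Fin 3) ℤ) i.castSucc j.castSucc).det = -1) ∧
      ((M : Matrix (Fin 3) (Fin 3) ℤ) 2 2 = 1 ∨ (M : Matrix (Fin 3) (Fin 3) ℤ) 2 2 = -1)) :=
  stmt_11_general E β hβ M
end

section
/- Let p be an odd prime. Then the number of orbits of Γ₁(p,p)^* acting on the projective line ℙ¹(ℚ) equals p − 1. -/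
/-!
A point of `ℙ¹(ℚ)` is the line of a primitive integer vector `(a, c)`, unique up to sign.
Modulo `p` every element of `Γ₁(p,p)^*` is `[[±1, *], [0, 1]]`, so the class of `c` in
`(ℤ/p)ˣ/±1`, or that of `a` when `p ∣ c`, is an orbit invariant with `2 · (p - 1)/2` values.
Conversely, if `(a, c)` and `(a', c')` have the same invariant, complete them to
`γ, γ' ∈ SL₂(ℤ)` whose second rows agree modulo `p` (adjusting `γ'` by a unipotent matrix);
then `γ' γ⁻¹ ∈ Γ₁(p,p)^*` maps `(a, c)` to `(a', c')`.
-/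

/-- The projective line `ℙ¹(ℚ)`: the set of `1`-dimensional `ℚ`-subspaces of `ℚ²`. -/
def ProjLineQ : Type := {L : Submodule ℚ (Fin 2 → ℚ) // Module.finrank ℚ L = 1}

/-- The orbit relation on `ℙ¹(ℚ)` for the group `Γ₁(M,Δ)^*` of integer matrices
`g = [[a,b],[c,D]]` with `det g = ±1`, `c ≡ 0 (mod M)` and `a ≡ det g (mod Δ)`. -/
def relGamma1Star (M Δ : ℕ) (L L' : ProjLineQ) : Prop :=
  ∃ g : Matrix (Fin 2) (Fin 2) ℤ, (g.det = 1 ∨ g.det = -1) ∧ (M : ℤ) ∣ g 1 0 ∧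
    (Δ : ℤ) ∣ (g 0 0 - g.det) ∧
    Submodule.map (Matrix.mulVecLin (g.map ((↑) : ℤ → ℚ))) L.1 = L'.1

open Submodule Module

def intLine (a c : ℤ) : Submodule ℚ (Fin 2 → ℚ) := ℚ ∙ ![(a : ℚ), (c : ℚ)]

theorem intLine_neg (a c : ℤ) : intLine (-a) (-c) = intLine a c := by
  have : ![((-a : ℤ) : ℚ), ((-c : ℤ) : ℚ)] = (-1 : ℚ) • ![(a : ℚ), (c : ℚ)] := by
    ext i; fin_cases i <;> simp
  rw [intLine, this, span_singleton_smul_eq isUnit_one.neg, intLine]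

theorem map_intLine (g : Matrix (Fin 2) (Fin 2) ℤ) (a c : ℤ) :
    (intLine a c).map (Matrix.mulVecLin (g.map ((↑) : ℤ → ℚ))) =
      intLine (g 0 0 * a + g 0 1 * c) (g 1 0 * a + g 1 1 * c) := by
  rw [intLine, map_span, Set.image_singleton, intLine]
  congr 2
  ext i; fin_cases i <;> simp [Matrix.mulVec, dotProduct, Fin.sum_univ_two]

theorem IsCoprime.ratVec_ne_zero {a c : ℤ} (h : IsCoprime a c) :
    ![(a : ℚ), (c : ℚ)] ≠ 0 := by
  intro h0
  have ha : a = 0 := by simpa using congrFun h0 0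
  have hc : c = 0 := by simpa using congrFun h0 1
  exact not_isCoprime_zero_zero (ha ▸ hc ▸ h)

theorem finrank_intLine {a c : ℤ} (h : IsCoprime a c) : finrank ℚ (intLine a c) = 1 :=
  finrank_span_singleton h.ratVec_ne_zero

theorem exists_isCoprime_intLine_eq {L : Submodule ℚ (Fin 2 → ℚ)} (hL : finrank ℚ L = 1) :
    ∃ a c : ℤ, IsCoprime a c ∧ L = intLine a c := by
  obtain ⟨v, hvL, hv⟩ := L.exists_mem_ne_zero_of_ne_bot (by rintro rfl; simp at hL)
  have hLv : L = ℚ ∙ v := (eq_of_le_of_finrank_eq ((span_singleton_le_iff_mem v L).mpr hvL)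
    (by rw [finrank_span_singleton hv, hL])).symm
  subst hLv
  by_cases h1 : v 1 = 0
  · have h0 : v 0 ≠ 0 := fun h0 => hv (by ext i; fin_cases i <;> simp [h0, h1])
    refine ⟨1, 0, isCoprime_one_left, ?_⟩
    have : v = v 0 • ![((1 : ℤ) : ℚ), ((0 : ℤ) : ℚ)] := by ext i; fin_cases i <;> simp [h1]
    rw [intLine, this, span_singleton_smul_eq (isUnit_iff_ne_zero.mpr h0)]
  · let q := v 0 / v 1
    have hden : (q.den : ℚ) ≠ 0 := by exact_mod_cast q.den_nz
    refine ⟨q.num, q.den, Rat.isCoprime_num_den q, ?_⟩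
    have : v = (v 1 / q.den) • ![(q.num : ℚ), ((q.den : ℤ) : ℚ)] := by
      have hnum : (q.num : ℚ) = v 0 / v 1 * q.den := (Rat.mul_den_eq_num q).symm
      ext i; fin_cases i
      · simp only [hnum]; simp; field_simp
      · simp
    rw [intLine, this, span_singleton_smul_eq (isUnit_iff_ne_zero.mpr (div_ne_zero h1 hden))]

theorem IsCoprime.eq_or_eq_neg_of_mul_eq {a c a' c' : ℤ} (h : IsCoprime a c)
    (h' : IsCoprime a' c') {z : ℚ} (ha : z * a = a') (hc : z * c = c') :
    (a' = a ∧ c' = c) ∨ (a' = -a ∧ c' = -c) := by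
  obtain ⟨u, v, huv⟩ := h
  -- `z = z * (u * a + v * c)` is an integer, and it divides the coprime pair `(a', c')`
  have hz : z = ((u * a' + v * c' : ℤ) : ℚ) := by
    have huv' : (u : ℚ) * a + v * c = 1 := by exact_mod_cast huv
    push_cast; rw [← ha, ← hc]; linear_combination (-z) * huv'
  set m := u * a' + v * c'
  have hma : m * a = a' := by exact_mod_cast hz ▸ ha
  have hmc : m * c = c' := by exact_mod_cast hz ▸ hc
  rcases Int.isUnit_iff.mp (h'.isUnit_of_dvd' ⟨a, hma.symm⟩ ⟨c, hmc.symm⟩) with hm | hm <;>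
    simp only [hm, one_mul, neg_one_mul] at hma hmc
  exacts [Or.inl ⟨hma.symm, hmc.symm⟩, Or.inr ⟨hma.symm, hmc.symm⟩]

theorem intLine_eq_intLine_iff {a c a' c' : ℤ} (h : IsCoprime a c) (h' : IsCoprime a' c') :
    intLine a c = intLine a' c' ↔ (a' = a ∧ c' = c) ∨ (a' = -a ∧ c' = -c) := by
  constructor
  · intro hs
    obtain ⟨z, hz⟩ := span_singleton_eq_span_singleton.mp hs
    exact h.eq_or_eq_neg_of_mul_eq h' (z := z) (by simpa [Units.smul_def] using congrFun hz 0)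
      (by simpa [Units.smul_def] using congrFun hz 1)
  · rintro (⟨rfl, rfl⟩ | ⟨rfl, rfl⟩)
    · rfl
    · exact (intLine_neg a c).symm

theorem IsCoprime.mulVec {a c : ℤ} (h : IsCoprime a c) {g : Matrix (Fin 2) (Fin 2) ℤ}
    (hdet : g.det = 1 ∨ g.det = -1) :
    IsCoprime (g 0 0 * a + g 0 1 * c) (g 1 0 * a + g 1 1 * c) := by
  obtain ⟨u, v, huv⟩ := h
  have hdet2 : g.det * g.det = 1 := by rcases hdet with h | h <;> simp [h]
  rw [Matrix.det_fin_two] at hdet2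
  -- the inverse of `g` is `det g • adj g`
  refine ⟨g.det * (u * g 1 1 - v * g 1 0), g.det * (v * g 0 0 - u * g 0 1), ?_⟩
  rw [Matrix.det_fin_two]
  linear_combination (g 0 0 * g 1 1 - g 0 1 * g 1 0) ^ 2 * huv + hdet2

theorem Units.mem_zpowers_neg_one_iff {R : Type*} [Monoid R] [HasDistribNeg R] (u : Rˣ) :
    u ∈ Subgroup.zpowers (-1 : Rˣ) ↔ u = 1 ∨ u = -1 := by
  constructor
  · rintro ⟨k, rfl⟩
    rcases Int.even_or_odd k with hk | hk
    · exact Or.inl hk.neg_one_zpow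
    · exact Or.inr hk.neg_one_zpow
  · rintro (rfl | rfl)
    · exact one_mem _
    · exact Subgroup.mem_zpowers _

abbrev UnitsModSign (K : Type*) [Field K] := Kˣ ⧸ Subgroup.zpowers (-1 : Kˣ)

section SignClass

variable {K : Type*} [Field K]

open Classical in
/-- The value at `0` is junk. -/
noncomputable def signClass (x : K) : UnitsModSign K :=
  if h : x = 0 then 1 else QuotientGroup.mk (Units.mk0 x h)

theorem signClass_neg (x : K) : signClass (-x) = signClass x := by
  by_cases hx : x = 0
  · simp [hx]
  rw [signClass, signClass, dif_neg (neg_ne_zero.mpr hx), dif_neg hx, QuotientGroup.eq,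
    Units.mem_zpowers_neg_one_iff]
  right; ext; simp [hx]

theorem signClass_eq_signClass_iff {x y : K} (hx : x ≠ 0) (hy : y ≠ 0) :
    signClass x = signClass y ↔ y = x ∨ y = -x := by
  rw [signClass, signClass, dif_neg hx, dif_neg hy, QuotientGroup.eq,
    Units.mem_zpowers_neg_one_iff, inv_mul_eq_one, inv_mul_eq_iff_eq_mul, mul_neg_one,
    Units.ext_iff, Units.ext_iff]
  simp [eq_comm]

theorem exists_ne_zero_signClass_eq (q : UnitsModSign K) : ∃ x : K, x ≠ 0 ∧ signClass x = q := by
  obtain ⟨u, rfl⟩ := QuotientGroup.mk_surjective q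
  exact ⟨u, u.ne_zero, by simp [signClass]⟩

theorem card_unitsModSign_mul_two {p : ℕ} [Fact p.Prime] (hp2 : p ≠ 2) :
    Nat.card (UnitsModSign (ZMod p)) * 2 = p - 1 := by
  have : Fact (2 < p) := ⟨lt_of_le_of_ne (Fact.out : p.Prime).two_le (Ne.symm hp2)⟩
  have horder : orderOf (-1 : (ZMod p)ˣ) = 2 :=
    orderOf_eq_prime (by simp) fun h => ZMod.neg_one_ne_one (congrArg Units.val h)
  have := Subgroup.card_eq_card_quotient_mul_card_subgroup (Subgroup.zpowers (-1 : (ZMod p)ˣ))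
  rwa [Nat.card_zpowers, horder, Nat.card_eq_fintype_card, ZMod.card_units_eq_totient,
    Nat.totient_prime Fact.out, eq_comm] at this

open Classical in
noncomputable def cuspInvariant (x y : K) : UnitsModSign K ⊕ UnitsModSign K :=
  if y = 0 then .inl (signClass x) else .inr (signClass y)

theorem cuspInvariant_neg (x y : K) : cuspInvariant (-x) (-y) = cuspInvariant x y := by
  by_cases hy : y = 0 <;> simp [cuspInvariant, hy, signClass_neg]

theorem cuspInvariant_mul_add {e : K} (he : e = 1 ∨ e = -1) (b x y : K) :
    cuspInvariant (e * x + b * y) y = cuspInvariant x y := by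
  by_cases hy : y = 0
  · rcases he with rfl | rfl <;> simp [cuspInvariant, hy, signClass_neg]
  · simp [cuspInvariant, hy]

theorem eq_of_cuspInvariant_eq {x y x' y' : K} (hxy : x ≠ 0 ∨ y ≠ 0) (hxy' : x' ≠ 0 ∨ y' ≠ 0)
    (h : cuspInvariant x y = cuspInvariant x' y') :
    (y' = y ∧ (y = 0 → x' = x)) ∨ (-y' = y ∧ (y = 0 → -x' = x)) := by
  unfold cuspInvariant at h
  by_cases hy : y = 0 <;> by_cases hy' : y' = 0 <;> simp only [hy, hy', if_true, if_false,
    Sum.inl.injEq, Sum.inr.injEq, reduceCtorEq] at h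
  · rw [signClass_eq_signClass_iff (hxy.resolve_right (not_not.mpr hy))
      (hxy'.resolve_right (not_not.mpr hy'))] at h
    rcases h with h | h
    · exact Or.inl ⟨hy'.trans hy.symm, fun _ => h⟩
    · exact Or.inr ⟨by simp [hy, hy'], fun _ => by simp [h]⟩
  · rw [signClass_eq_signClass_iff hy hy'] at h
    rcases h with h | h
    · exact Or.inl ⟨h, fun h0 => absurd h0 hy⟩
    · exact Or.inr ⟨by simp [h], fun h0 => absurd h0 hy⟩

end SignClass

def IsGamma1Star (M Δ : ℕ) (g : Matrix (Fin 2) (Fin 2) ℤ) : Prop :=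
  (g.det = 1 ∨ g.det = -1) ∧ (M : ℤ) ∣ g 1 0 ∧ (Δ : ℤ) ∣ (g 0 0 - g.det)

theorem relGamma1Star_iff {M Δ : ℕ} {L L' : ProjLineQ} :
    relGamma1Star M Δ L L' ↔ ∃ g, IsGamma1Star M Δ g ∧
      L.1.map (Matrix.mulVecLin (g.map ((↑) : ℤ → ℚ))) = L'.1 := by
  simp only [relGamma1Star, IsGamma1Star, and_assoc]

theorem isGamma1Star_iff {M Δ : ℕ} {g : Matrix (Fin 2) (Fin 2) ℤ} :
    IsGamma1Star M Δ g ↔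
      (g.det = 1 ∨ g.det = -1) ∧ (g 1 0 : ZMod M) = 0 ∧ (g 0 0 : ZMod Δ) = g.det := by
  rw [IsGamma1Star, ZMod.intCast_zmod_eq_zero_iff_dvd, ZMod.intCast_eq_intCast_iff_dvd_sub,
    dvd_sub_comm]

theorem IsGamma1Star.intCast_one_one {N : ℕ} {g : Matrix (Fin 2) (Fin 2) ℤ}
    (hg : IsGamma1Star N N g) : (g 1 1 : ZMod N) = 1 := by
  obtain ⟨hdet, h10, h00⟩ := isGamma1Star_iff.mp hg
  have hz := congrArg (Int.cast : ℤ → ZMod N) (Matrix.det_fin_two g)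
  generalize g.det = e at hdet h00 hz
  have he2 : (e : ZMod N) * e = 1 := by rcases hdet with rfl | rfl <;> simp
  push_cast at hz
  rw [h00, h10] at hz
  linear_combination (-(e : ZMod N)) * hz + (1 - (g 1 1 : ZMod N)) * he2

section Prime

variable {p : ℕ} [Fact p.Prime]

theorem cuspInvariant_mulVec {g : Matrix (Fin 2) (Fin 2) ℤ} (hg : IsGamma1Star p p g) (a c : ℤ) :
    cuspInvariant ((g 0 0 * a + g 0 1 * c : ℤ) : ZMod p) ((g 1 0 * a + g 1 1 * c : ℤ) : ZMod p) =
      cuspInvariant (a : ZMod p) c := by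
  obtain ⟨hdet, h10, h00⟩ := isGamma1Star_iff.mp hg
  have he : (g.det : ZMod p) = 1 ∨ (g.det : ZMod p) = -1 := by
    rcases hdet with h | h <;> simp [h]
  push_cast
  rw [h00, h10, hg.intCast_one_one, zero_mul, zero_add, one_mul,
    cuspInvariant_mul_add he]

-- `[[a', b'], [c', d']] * [[a, b], [c, d]]⁻¹` maps `(a, c)` to `(a', c')`
theorem exists_isGamma1Star_of_completions {N : ℕ} {a b c d a' b' c' d' : ℤ}
    (h : a * d - b * c = 1) (h' : a' * d' - b' * c' = 1)
    (hc : (c' : ZMod N) = c) (hd : (d' : ZMod N) = d) :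
    ∃ g, IsGamma1Star N N g ∧ g 0 0 * a + g 0 1 * c = a' ∧ g 1 0 * a + g 1 1 * c = c' := by
  let g : Matrix (Fin 2) (Fin 2) ℤ :=
    !![a' * d - b' * c, b' * a - a' * b; c' * d - d' * c, d' * a - c' * b]
  have hdet : g.det = 1 := by
    rw [Matrix.det_fin_two_of]; linear_combination (a' * d' - b' * c') * h + h'
  refine ⟨g, isGamma1Star_iff.mpr ⟨Or.inl hdet, ?_, ?_⟩, ?_, ?_⟩
  · simp [g, hc, hd, mul_comm]
  · have h'N : (a' : ZMod N) * d' - b' * c' = 1 := by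
      exact_mod_cast congrArg (Int.cast : ℤ → ZMod N) h'
    rw [hc, hd] at h'N
    simp [g, hdet, h'N]
  · simp only [g, Matrix.of_apply, Matrix.cons_val', Matrix.cons_val_zero, Matrix.cons_val_one,
      Matrix.empty_val', Matrix.cons_val_fin_one]
    linear_combination a' * h
  · simp only [g, Matrix.of_apply, Matrix.cons_val', Matrix.cons_val_zero, Matrix.cons_val_one,
      Matrix.empty_val', Matrix.cons_val_fin_one]
    linear_combination c' * h

theorem IsCoprime.intCast_zmod_ne_zero_or {a c : ℤ} (h : IsCoprime a c) :
    (a : ZMod p) ≠ 0 ∨ (c : ZMod p) ≠ 0 := by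
  simp only [ne_eq, ZMod.intCast_zmod_eq_zero_iff_dvd, ← not_and_or]
  exact fun ⟨ha, hc⟩ => (Nat.prime_iff_prime_int.mp Fact.out).not_isUnit (h.isUnit_of_dvd' ha hc)

theorem exists_completion_congr {a b c d a' c' : ℤ} (h : a * d - b * c = 1) (h' : IsCoprime a' c')
    (hc : (c' : ZMod p) = c) (ha : (c : ZMod p) = 0 → (a' : ZMod p) = a) :
    ∃ b' d', a' * d' - b' * c' = 1 ∧ (d' : ZMod p) = d := by
  obtain ⟨d₀, b₀, h₀⟩ := h'
  -- shifting a completion by `k` times the first column keeps it a completion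
  let k : ℤ := (((d - d₀) * (c' : ZMod p)⁻¹ : ZMod p)).cast
  refine ⟨-b₀ + k * a', d₀ + k * c', by linear_combination h₀, ?_⟩
  push_cast [k, ZMod.intCast_cast, ZMod.cast_id]
  by_cases hc0 : (c : ZMod p) = 0
  · have hZ := congrArg (Int.cast : ℤ → ZMod p) h
    have hZ₀ := congrArg (Int.cast : ℤ → ZMod p) h₀
    push_cast at hZ hZ₀
    rw [hc, ha hc0, hc0] at hZ₀
    rw [hc0] at hZ
    rw [hc, hc0]
    linear_combination (d : ZMod p) * hZ₀ - (d₀ : ZMod p) * hZ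
  · rw [hc]; field_simp; ring

theorem exists_isGamma1Star_map_intLine_of_congr {a c a' c' : ℤ} (h : IsCoprime a c)
    (h' : IsCoprime a' c') (hc : (c' : ZMod p) = c) (ha : (c : ZMod p) = 0 → (a' : ZMod p) = a) :
    ∃ g, IsGamma1Star p p g ∧
      (intLine a c).map (Matrix.mulVecLin (g.map ((↑) : ℤ → ℚ))) = intLine a' c' := by
  obtain ⟨d, b, hbd⟩ := h
  have hbd₁ : a * d - -b * c = 1 := by linear_combination hbd
  obtain ⟨b', d', hbd', hd⟩ := exists_completion_congr hbd₁ h' hc ha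
  obtain ⟨g, hg, ha', hc'⟩ := exists_isGamma1Star_of_completions hbd₁ hbd' hc hd
  exact ⟨g, hg, by rw [map_intLine, ha', hc']⟩

theorem exists_isGamma1Star_map_intLine_of_cuspInvariant_eq {a c a' c' : ℤ} (h : IsCoprime a c)
    (h' : IsCoprime a' c') (hinv : cuspInvariant (a : ZMod p) c = cuspInvariant (a' : ZMod p) c') :
    ∃ g, IsGamma1Star p p g ∧
      (intLine a c).map (Matrix.mulVecLin (g.map ((↑) : ℤ → ℚ))) = intLine a' c' := by
  rcases eq_of_cuspInvariant_eq h.intCast_zmod_ne_zero_or h'.intCast_zmod_ne_zero_or hinv with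
    ⟨hc, ha⟩ | ⟨hc, ha⟩
  · exact exists_isGamma1Star_map_intLine_of_congr h h' hc ha
  · rw [← intLine_neg a' c']
    exact exists_isGamma1Star_map_intLine_of_congr h h'.neg_neg (by push_cast; exact hc)
      (by push_cast; exact ha)

theorem cuspInvariant_eq_of_intLine_eq {a c a' c' : ℤ} (h : IsCoprime a c) (h' : IsCoprime a' c')
    (hs : intLine a c = intLine a' c') :
    cuspInvariant (a : ZMod p) c = cuspInvariant (a' : ZMod p) c' := by
  rcases (intLine_eq_intLine_iff h h').mp hs with ⟨rfl, rfl⟩ | ⟨rfl, rfl⟩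
  · rfl
  · rw [Int.cast_neg, Int.cast_neg, cuspInvariant_neg]

theorem ProjLineQ.exists_eq_intLine (L : ProjLineQ) :
    ∃ v : ℤ × ℤ, IsCoprime v.1 v.2 ∧ L.1 = intLine v.1 v.2 := by
  obtain ⟨a, c, h, hL⟩ := exists_isCoprime_intLine_eq L.2
  exact ⟨(a, c), h, hL⟩

variable (p) in
noncomputable def lineCuspInvariant (L : ProjLineQ) :
    UnitsModSign (ZMod p) ⊕ UnitsModSign (ZMod p) :=
  cuspInvariant (L.exists_eq_intLine.choose.1 : ZMod p) L.exists_eq_intLine.choose.2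

theorem lineCuspInvariant_eq {L : ProjLineQ} {a c : ℤ} (h : IsCoprime a c)
    (hL : L.1 = intLine a c) : lineCuspInvariant p L = cuspInvariant (a : ZMod p) c :=
  cuspInvariant_eq_of_intLine_eq L.exists_eq_intLine.choose_spec.1 h
    (L.exists_eq_intLine.choose_spec.2.symm.trans hL)

theorem relGamma1Star_iff_cuspInvariant_eq (L L' : ProjLineQ) :
    relGamma1Star p p L L' ↔ lineCuspInvariant p L = lineCuspInvariant p L' := by
  obtain ⟨a, c, h, hL⟩ := exists_isCoprime_intLine_eq L.2
  obtain ⟨a', c', h', hL'⟩ := exists_isCoprime_intLine_eq L'.2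
  rw [relGamma1Star_iff, lineCuspInvariant_eq h hL, lineCuspInvariant_eq h' hL', hL,
    hL']
  constructor
  · rintro ⟨g, hg, hmap⟩
    rw [map_intLine] at hmap
    rw [← cuspInvariant_eq_of_intLine_eq (h.mulVec hg.1) h' hmap, cuspInvariant_mulVec hg]
  · exact exists_isGamma1Star_map_intLine_of_cuspInvariant_eq h h'

theorem lineCuspInvariant_surjective : Function.Surjective (lineCuspInvariant p) := by
  have hprime := Nat.prime_iff_prime_int.mp (Fact.out : p.Prime)
  have exists_lift (x : ZMod p) (hx : x ≠ 0) : ∃ n : ℤ, (n : ZMod p) = x ∧ IsCoprime (p : ℤ) n :=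
    ⟨x.cast, ZMod.intCast_zmod_cast x, hprime.coprime_iff_not_dvd.mpr fun hn =>
      hx (by rwa [← ZMod.intCast_zmod_eq_zero_iff_dvd, ZMod.intCast_zmod_cast] at hn)⟩
  have hline {a c : ℤ} (h : IsCoprime a c) :
      lineCuspInvariant p ⟨intLine a c, finrank_intLine h⟩ = cuspInvariant (a : ZMod p) c :=
    lineCuspInvariant_eq h rfl
  rintro (q | q) <;> obtain ⟨x, hx, rfl⟩ := exists_ne_zero_signClass_eq q <;>
    obtain ⟨n, rfl, hn⟩ := exists_lift x hx
  · exact ⟨_, (hline hn.symm).trans (by simp [cuspInvariant])⟩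
  · exact ⟨_, (hline (isCoprime_one_left (x := n))).trans (by simp [cuspInvariant, hx])⟩

end Prime

/-- **Statement 12.** For an odd prime `p`, the number of orbits of `Γ₁(p,p)^*` on
`ℙ¹(ℚ)` equals `p - 1`. -/
theorem stmt_12 (p : ℕ) (hp : p.Prime) (hodd : p ≠ 2) :
    Nat.card (Quot (relGamma1Star p p)) = p - 1 := by
  have : Fact p.Prime := ⟨hp⟩
  have e : Quot (relGamma1Star p p) ≃ UnitsModSign (ZMod p) ⊕ UnitsModSign (ZMod p) :=
    (Quot.congrRight relGamma1Star_iff_cuspInvariant_eq).trans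
      (Setoid.quotientKerEquivOfSurjective _ lineCuspInvariant_surjective)
  rw [Nat.card_congr e, Nat.card_sum]
  have := card_unitsModSign_mul_two hodd
  omega
end
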